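/- arXiv:1701.08204 — 2 statements merged into one kernel-verified Lean document; each statement's English description precedes it below -/
import Mathlib

section
/- Let μ, ν be probability measures on ℝ with finite first moments, and let f be a C² function with compact support. Then ∫ f dμ − ∫ f dν = ∫_ℝ f''(K)(c_μ(K) − c_ν(K)) dK, where c_μ(K) = ∫(x−K)^+ dμ and c_ν(K) = ∫(x−K)^+ dν. -/
/-!
Taylor's formula with integral remainder, started to the left of the support of `f`, writes
`f x = ∫ f''(K) (x - K)⁺ dK`. Integrating in `x` against `μ` and exchanging the order of
integration (Fubini, justified by `(x - K)⁺ ≤ |x| + |K|`, the first moment of `μ` and the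
compact support of `f''`) gives `∫ f dμ = ∫ f''(K) c_μ(K) dK`; subtract the same identity for `ν`.
-/

open MeasureTheory Function Set

noncomputable def callPrice (μ : Measure ℝ) (K : ℝ) : ℝ := ∫ x, max (x - K) 0 ∂μ

theorem integral_sub_mul_deriv_deriv {f : ℝ → ℝ} (hf : ContDiff ℝ 2 f) (a x : ℝ) :
    ∫ K in a..x, (x - K) * deriv (deriv f) K = f x - f a - (x - a) * deriv f a := by
  have hf' : ContDiff ℝ 1 (deriv f) := hf.iterate_deriv' 1 1
  rw [intervalIntegral.integral_mul_deriv_eq_deriv_mul (u' := fun _ => -1)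
      (fun K _ => by simpa using (hasDerivAt_id K).const_sub x)
      (fun K _ => (hf'.differentiable one_ne_zero K).hasDerivAt) intervalIntegrable_const
      ((hf'.continuous_deriv le_rfl).intervalIntegrable _ _)]
  simp only [neg_one_mul, intervalIntegral.integral_neg,
    intervalIntegral.integral_deriv_eq_sub (fun y _ => hf.differentiable two_ne_zero y)
      (hf'.continuous.intervalIntegrable _ _)]
  ring

theorem eq_integral_deriv_deriv_mul_posPart {f : ℝ → ℝ} (hf : ContDiff ℝ 2 f)
    (hsupp : HasCompactSupport f) (x : ℝ) :
    f x = ∫ K, deriv (deriv f) K * max (x - K) 0 := by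
  obtain ⟨b, hb⟩ := hsupp.isCompact.bddBelow
  set a := min x b - 1
  have ha : a < x := by linarith [min_le_left x b]
  have hvanish (g : ℝ → ℝ) (hg : tsupport g ⊆ tsupport f) (y : ℝ) (hy : y ≤ a) : g y = 0 :=
    image_eq_zero_of_notMem_tsupport fun h => by linarith [hb (hg h), min_le_right x b]
  have hsupp'' : tsupport (deriv (deriv f)) ⊆ tsupport f :=
    tsupport_deriv_subset.trans tsupport_deriv_subset
  have hsub : support (fun K => deriv (deriv f) K * max (x - K) 0) ⊆ Ioc a x := by
    intro K hK
    by_contra hK'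
    rcases not_and_or.mp hK' with hKa | hKx
    · exact hK (by simp [hvanish _ hsupp'' K (not_lt.mp hKa)])
    · exact hK (by simp [max_eq_right (by linarith [not_le.mp hKx] : x - K ≤ 0)])
  rw [← intervalIntegral.integral_eq_integral_of_support_subset hsub,
    intervalIntegral.integral_congr (g := fun K => (x - K) * deriv (deriv f) K),
    integral_sub_mul_deriv_deriv hf, hvanish f subset_rfl a le_rfl,
    hvanish (deriv f) tsupport_deriv_subset a le_rfl]
  · ring
  · intro K hK
    rw [uIcc_of_le ha.le] at hK
    simp only [max_eq_left (sub_nonneg.mpr hK.2), mul_comm]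

theorem integrable_mul_posPart_sub_prod {μ : Measure ℝ} [IsFiniteMeasure μ]
    (hμ : Integrable (fun x => |x|) μ) {g : ℝ → ℝ} (hg : Continuous g)
    (hgs : HasCompactSupport g) :
    Integrable (fun p : ℝ × ℝ => g p.2 * max (p.1 - p.2) 0) (μ.prod volume) := by
  have hg_int : Integrable g := hg.integrable_of_hasCompactSupport hgs
  have hid_mul_g_int : Integrable (fun K => K * g K) :=
    (continuous_id.mul hg).integrable_of_hasCompactSupport hgs.mul_left
  refine ((hμ.mul_prod hg_int.norm).add ((integrable_const (1 : ℝ)).mul_prod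
    hid_mul_g_int.norm)).mono' (by fun_prop : Continuous _).aestronglyMeasurable
    (ae_of_all _ fun p => ?_)
  calc ‖g p.2 * max (p.1 - p.2) 0‖ = |g p.2| * max (p.1 - p.2) 0 := by
        rw [Real.norm_eq_abs, abs_mul, abs_of_nonneg (le_max_right (p.1 - p.2) 0)]
    _ ≤ |g p.2| * (|p.1| + |p.2|) := by
        gcongr
        exact max_le (by linarith [le_abs_self p.1, neg_abs_le p.2]) (by positivity)
    _ = |p.1| * ‖g p.2‖ + 1 * ‖p.2 * g p.2‖ := by simp only [Real.norm_eq_abs, abs_mul]; ring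

section OneMeasure

variable {μ : Measure ℝ} [IsFiniteMeasure μ] {f : ℝ → ℝ}

theorem integrable_deriv_deriv_mul_posPart_sub_prod (hμ : Integrable (fun x => |x|) μ)
    (hf : ContDiff ℝ 2 f) (hsupp : HasCompactSupport f) :
    Integrable (fun p : ℝ × ℝ => deriv (deriv f) p.2 * max (p.1 - p.2) 0) (μ.prod volume) :=
  integrable_mul_posPart_sub_prod hμ (hf.iterate_deriv' 0 2).continuous hsupp.deriv.deriv

theorem integral_eq_integral_deriv_deriv_mul_callPrice (hμ : Integrable (fun x => |x|) μ)
    (hf : ContDiff ℝ 2 f) (hsupp : HasCompactSupport f) :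
    ∫ x, f x ∂μ = ∫ K, deriv (deriv f) K * callPrice μ K := by
  calc ∫ x, f x ∂μ = ∫ x, (∫ K, deriv (deriv f) K * max (x - K) 0) ∂μ :=
        integral_congr_ae (ae_of_all _ (eq_integral_deriv_deriv_mul_posPart hf hsupp))
    _ = ∫ K, ∫ x, deriv (deriv f) K * max (x - K) 0 ∂μ :=
        integral_integral_swap (integrable_deriv_deriv_mul_posPart_sub_prod hμ hf hsupp)
    _ = ∫ K, deriv (deriv f) K * callPrice μ K := by simp only [integral_const_mul, callPrice]

theorem integrable_deriv_deriv_mul_callPrice (hμ : Integrable (fun x => |x|) μ)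
    (hf : ContDiff ℝ 2 f) (hsupp : HasCompactSupport f) :
    Integrable (fun K => deriv (deriv f) K * callPrice μ K) := by
  simpa only [integral_const_mul, callPrice] using
    (integrable_deriv_deriv_mul_posPart_sub_prod hμ hf hsupp).integral_prod_right

end OneMeasure

theorem stmt_3 (μ ν : Measure ℝ) [IsProbabilityMeasure μ] [IsProbabilityMeasure ν]
    (hμ : Integrable (fun x : ℝ => |x|) μ) (hν : Integrable (fun x : ℝ => |x|) ν)
    (f : ℝ → ℝ) (hf : ContDiff ℝ 2 f) (hsupp : HasCompactSupport f) :
    (∫ x, f x ∂μ) - (∫ x, f x ∂ν)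
      = ∫ K : ℝ, deriv (deriv f) K *
          ((∫ x, max (x - K) 0 ∂μ) - (∫ x, max (x - K) 0 ∂ν)) := by
  rw [integral_eq_integral_deriv_deriv_mul_callPrice hμ hf hsupp,
    integral_eq_integral_deriv_deriv_mul_callPrice hν hf hsupp,
    ← integral_sub (integrable_deriv_deriv_mul_callPrice hμ hf hsupp)
      (integrable_deriv_deriv_mul_callPrice hν hf hsupp)]
  simp only [callPrice, mul_sub]
end

section
/- Let μ, ν be probability measures on ℝ with ∫|x|^p dμ ≤ V and ∫|x|^p dν ≤ V for some p > 2. Then for every R > 0, |∫x² dμ − ∫x² dν| ≤ 2R·W(μ,ν) + 2V/R^{p−2}, where W is the Wasserstein-1 distance. Consequently, choosing R = W(μ,ν)^{−1/(p−1)}, one gets |∫x²dμ − ∫x²dν| ≤ C·W(μ,ν)^{(p−2)/(p−1)} for a constant C depending only on V. -/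
/-!
Truncate the square at level `R²`: since `x² - min (x², R²) ≤ |x|^p / R^(p-2)`, truncation
moves each second moment by at most `V / R^(p-2)`. By the layer-cake formula,
`∫ min (x², R²) dμ = ∫₀^R 2t μ(|x| > t) dt`, and `μ(|x| > t) = F_μ(-t) + 1 - F_μ(t)` for almost
every `t`, so the truncated second moments differ by at most `2R ∫ |F_μ - F_ν|`.
Taking `R = W^(-1/(p-1))` balances the two error terms.
-/

open MeasureTheory ProbabilityTheory Set Filter
open scoped ENNReal

theorem integrable_of_integrableOn_Ioi_comp_neg_add {f : ℝ → ℝ} (hf : Measurable f)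
    (hf₀ : ∀ x, 0 ≤ f x) (h : IntegrableOn (fun t => f (-t) + f t) (Ioi 0)) : Integrable f := by
  have hpos : IntegrableOn f (Ioi 0) :=
    h.mono' hf.aestronglyMeasurable (ae_of_all _ fun t => by
      rw [Real.norm_of_nonneg (hf₀ t)]; linarith [hf₀ (-t)])
  have hneg : IntegrableOn (fun t => f (-t)) (Ioi 0) :=
    h.mono' (hf.comp measurable_neg).aestronglyMeasurable (ae_of_all _ fun t => by
      rw [Real.norm_of_nonneg (hf₀ (-t))]; linarith [hf₀ t])
  have hIio : IntegrableOn f (Iio 0) := by simpa [neg_Ioi] using hneg.comp_neg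
  rw [← integrableOn_univ, ← Iio_union_Ici]
  exact hIio.union ((integrableOn_Ici_iff_integrableOn_Ioi enorm_ne_top).2 hpos)

theorem integral_eq_setIntegral_Ioi_comp_neg_add {f : ℝ → ℝ} (hf : Integrable f) :
    ∫ x, f x = ∫ t in Ioi 0, (f (-t) + f t) := by
  rw [integral_add hf.comp_neg.integrableOn hf.integrableOn, integral_comp_neg_Ioi, neg_zero,
    intervalIntegral.integral_Iic_add_Ioi hf.integrableOn hf.integrableOn]

theorem integral_setIntegral_eq_integral_measureReal_mul {α β : Type*} [MeasurableSpace α]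
    [MeasurableSpace β] {μ : Measure α} {ν : Measure β} [IsFiniteMeasure μ] [SFinite ν]
    {r : α → β → Prop} (hr : MeasurableSet {q : α × β | r q.1 q.2}) {g : β → ℝ}
    (hg : Integrable g ν) :
    ∫ x, ∫ t in {t | r x t}, g t ∂ν ∂μ = ∫ t, μ.real {x | r x t} * g t ∂ν := by
  set F : α × β → ℝ := {q : α × β | r q.1 q.2}.indicator fun q => g q.2
  calc ∫ x, ∫ t in {t | r x t}, g t ∂ν ∂μ = ∫ x, ∫ t, F (x, t) ∂ν ∂μ := by
        congr 1 with x
        exact (integral_indicator (measurable_prodMk_left hr)).symm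
    _ = ∫ t, ∫ x, F (x, t) ∂μ ∂ν := integral_integral_swap ((hg.comp_snd μ).indicator hr)
    _ = ∫ t, μ.real {x | r x t} * g t ∂ν := by
        congr 1 with t
        exact integral_indicator_const (g t) (measurable_prodMk_right hr)

theorem setIntegral_Iio_inter_Ioc_two_mul {c R : ℝ} (hc : 0 ≤ c) (hR : 0 ≤ R) :
    ∫ t in Iio c ∩ Ioc 0 R, 2 * t = min c R ^ 2 := by
  have hset : (Iio c ∩ Ioc 0 R : Set ℝ) =ᵐ[volume] (Ioc 0 (min c R) : Set ℝ) := by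
    rw [show Ioc 0 (min c R) = Iic c ∩ Ioc (0 : ℝ) R by ext; simp [and_comm, and_assoc]]
    exact (Iio_ae_eq_Iic (μ := volume)).inter (ae_eq_refl _)
  rw [setIntegral_congr_set hset, ← intervalIntegral.integral_of_le (le_min hc hR),
    intervalIntegral.integral_const_mul, integral_id]
  ring

section Tail

variable (μ : Measure ℝ)

theorem antitone_measureReal_lt_abs [IsFiniteMeasure μ] :
    Antitone fun t => μ.real {x | t < |x|} :=
  fun _ _ hst => measureReal_mono fun _ hx => hst.trans_lt hx

theorem integral_min_sq_eq_setIntegral_measureReal_lt_abs [IsFiniteMeasure μ] {R : ℝ}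
    (hR : 0 ≤ R) :
    ∫ x, min (x ^ 2) (R ^ 2) ∂μ = ∫ t in Ioc 0 R, μ.real {x | t < |x|} * (2 * t) := by
  have hr : MeasurableSet {q : ℝ × ℝ | q.2 < |q.1|} :=
    measurableSet_lt measurable_snd measurable_fst.abs
  rw [← integral_setIntegral_eq_integral_measureReal_mul hr (g := fun t => 2 * t)
    (by fun_prop : Continuous fun t : ℝ => 2 * t).integrableOn_Ioc]
  congr 1 with x
  rw [show {t : ℝ | t < |x|} = Iio |x| from rfl, Measure.restrict_restrict measurableSet_Iio,
    setIntegral_Iio_inter_Ioc_two_mul (abs_nonneg x) hR, ← sq_abs x]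
  rcases le_total |x| R with h | h
  · rw [min_eq_left h, min_eq_left (pow_le_pow_left₀ (abs_nonneg x) h 2)]
  · rw [min_eq_right h, min_eq_right (pow_le_pow_left₀ hR h 2)]

theorem integrableOn_Ioi_measureReal_lt_abs [IsFiniteMeasure μ]
    (h : Integrable (fun x : ℝ => |x|) μ) :
    IntegrableOn (fun t => μ.real {x | t < |x|}) (Ioi 0) := by
  refine ⟨(antitone_measureReal_lt_abs μ).measurable.aestronglyMeasurable, ?_⟩
  calc ∫⁻ t in Ioi 0, ‖μ.real {x | t < |x|}‖ₑ ≤ ∫⁻ t in Ioi 0, μ {x | t < |x|} :=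
        lintegral_mono fun t => by
          rw [Real.enorm_eq_ofReal measureReal_nonneg]; exact ENNReal.ofReal_toReal_le
    _ = ∫⁻ x, ENNReal.ofReal |x| ∂μ :=
        (lintegral_eq_lintegral_meas_lt μ (ae_of_all _ fun x => abs_nonneg x) h.aemeasurable).symm
    _ < ⊤ := h.lintegral_lt_top

theorem integrableOn_Ioc_measureReal_lt_abs_mul [IsFiniteMeasure μ]
    (h : Integrable (fun x : ℝ => |x|) μ) (R : ℝ) :
    IntegrableOn (fun t => μ.real {x | t < |x|} * (2 * t)) (Ioc 0 R) :=
  (((integrableOn_Ici_iff_integrableOn_Ioi enorm_ne_top).2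
    (integrableOn_Ioi_measureReal_lt_abs μ h)).mono_set Icc_subset_Ici_self).mul_continuousOn
    (by fun_prop) isCompact_Icc |>.mono_set Ioc_subset_Icc_self

/-- The identity fails exactly at the (countably many) `t` for which `-t` is an atom of `μ`. -/
theorem measureReal_lt_abs_ae_eq_cdf [IsProbabilityMeasure μ] :
    (fun t => μ.real {x | t < |x|}) =ᵐ[volume.restrict (Ioi 0)]
      fun t => cdf μ (-t) + (1 - cdf μ t) := by
  filter_upwards [meas_le_ae_eq_meas_lt μ (volume.restrict (Ioi 0)) (fun x => -x),
    self_mem_ae_restrict measurableSet_Ioi] with t hle ht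
  have hsplit : {x | t < |x|} = {x | t < -x} ∪ Ioi t := by
    ext x; simp [lt_abs, or_comm]
  have hdisj : Disjoint {x | t < -x} (Ioi t) :=
    Set.disjoint_left.2 fun x (h₁ : t < -x) (h₂ : t < x) => by linarith [mem_Ioi.1 ht]
  have hneg : μ.real {x | t < -x} = cdf μ (-t) := by
    rw [cdf_eq_real, measureReal_def, measureReal_def, ← hle]
    congr 2 with x; simp [le_neg]
  rw [hsplit, measureReal_union hdisj measurableSet_Ioi, hneg, ← compl_Iic,
    measureReal_compl measurableSet_Iic, probReal_univ]
  simp only [cdf_eq_real]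

end Tail

theorem abs_cdf_sub_add_abs_cdf_sub_le (μ ν : Measure ℝ) (t : ℝ) :
    |cdf μ (-t) - cdf ν (-t)| + |cdf μ t - cdf ν t| ≤
      (cdf μ (-t) + (1 - cdf μ t)) + (cdf ν (-t) + (1 - cdf ν t)) := by
  have := cdf_nonneg μ (-t); have := cdf_nonneg ν (-t)
  have := cdf_le_one μ t; have := cdf_le_one ν t
  have h₁ : |cdf μ (-t) - cdf ν (-t)| ≤ cdf μ (-t) + cdf ν (-t) := by
    rw [abs_le]; constructor <;> linarith
  have h₂ : |cdf μ t - cdf ν t| ≤ (1 - cdf μ t) + (1 - cdf ν t) := by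
    rw [abs_le]; constructor <;> linarith
  linarith

section TwoMeasures

variable (μ ν : Measure ℝ) [IsProbabilityMeasure μ] [IsProbabilityMeasure ν]

theorem integrable_abs_cdf_sub_cdf (hμ : Integrable (fun x : ℝ => |x|) μ)
    (hν : Integrable (fun x : ℝ => |x|) ν) :
    Integrable fun x => |cdf μ x - cdf ν x| := by
  have hm : Measurable fun x => |cdf μ x - cdf ν x| :=
    ((monotone_cdf μ).measurable.sub (monotone_cdf ν).measurable).abs
  refine integrable_of_integrableOn_Ioi_comp_neg_add hm (fun x => abs_nonneg _) ?_
  refine ((integrableOn_Ioi_measureReal_lt_abs μ hμ).add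
    (integrableOn_Ioi_measureReal_lt_abs ν hν)).mono'
    ((hm.comp measurable_neg).add hm).aestronglyMeasurable ?_
  filter_upwards [measureReal_lt_abs_ae_eq_cdf μ, measureReal_lt_abs_ae_eq_cdf ν] with t hμt hνt
  rw [Real.norm_of_nonneg (by positivity), Pi.add_apply, hμt, hνt]
  exact abs_cdf_sub_add_abs_cdf_sub_le μ ν t

theorem abs_integral_min_sq_sub_le (hμ : Integrable (fun x : ℝ => |x|) μ)
    (hν : Integrable (fun x : ℝ => |x|) ν) {R : ℝ} (hR : 0 ≤ R) :
    |(∫ x, min (x ^ 2) (R ^ 2) ∂μ) - ∫ x, min (x ^ 2) (R ^ 2) ∂ν|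
      ≤ 2 * R * ∫ x, |cdf μ x - cdf ν x| := by
  set D : ℝ → ℝ := fun x => |cdf μ x - cdf ν x|
  have hD : Integrable D := integrable_abs_cdf_sub_cdf μ ν hμ hν
  have hDfold : IntegrableOn (fun t => 2 * R * (D (-t) + D t)) (Ioi 0) :=
    (hD.comp_neg.add hD).integrableOn.const_mul _
  have hintμ := integrableOn_Ioc_measureReal_lt_abs_mul μ hμ R
  have hintν := integrableOn_Ioc_measureReal_lt_abs_mul ν hν R
  have hbound : ∀ᵐ t ∂volume.restrict (Ioc 0 R),
      |μ.real {x | t < |x|} * (2 * t) - ν.real {x | t < |x|} * (2 * t)|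
        ≤ 2 * R * (D (-t) + D t) := by
    have hsub : ∀ {P : ℝ → Prop}, (∀ᵐ t ∂volume.restrict (Ioi 0), P t) →
        ∀ᵐ t ∂volume.restrict (Ioc 0 R), P t :=
      ae_restrict_of_ae_restrict_of_subset Ioc_subset_Ioi_self
    filter_upwards [hsub (measureReal_lt_abs_ae_eq_cdf μ), hsub (measureReal_lt_abs_ae_eq_cdf ν),
      self_mem_ae_restrict measurableSet_Ioc] with t hμt hνt ht
    have hcdf : |cdf μ (-t) + (1 - cdf μ t) - (cdf ν (-t) + (1 - cdf ν t))| ≤ D (-t) + D t :=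
      calc _ = |(cdf μ (-t) - cdf ν (-t)) - (cdf μ t - cdf ν t)| := by ring_nf
        _ ≤ D (-t) + D t := abs_sub _ _
    rw [hμt, hνt, ← sub_mul, abs_mul, abs_of_nonneg (by linarith [ht.1] : 0 ≤ 2 * t), mul_comm]
    exact mul_le_mul (by linarith [ht.2]) hcdf (abs_nonneg _) (by positivity)
  rw [integral_min_sq_eq_setIntegral_measureReal_lt_abs μ hR,
    integral_min_sq_eq_setIntegral_measureReal_lt_abs ν hR, ← integral_sub hintμ hintν]
  calc _ ≤ ∫ t in Ioc 0 R, |μ.real {x | t < |x|} * (2 * t) - ν.real {x | t < |x|} * (2 * t)| :=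
        abs_integral_le_integral_abs
    _ ≤ ∫ t in Ioc 0 R, 2 * R * (D (-t) + D t) :=
        integral_mono_ae (hintμ.sub hintν).abs (hDfold.mono_set Ioc_subset_Ioi_self)
          hbound
    _ ≤ ∫ t in Ioi 0, 2 * R * (D (-t) + D t) :=
        setIntegral_mono_set hDfold (ae_of_all _ fun t => by positivity)
          Ioc_subset_Ioi_self.eventuallyLE
    _ = 2 * R * ∫ x, D x := by rw [integral_const_mul, integral_eq_setIntegral_Ioi_comp_neg_add hD]

end TwoMeasures

section Moments

variable {μ : Measure ℝ} [IsFiniteMeasure μ]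

theorem memLp_id_of_integrable_abs_rpow {p : ℝ} (hp : 0 < p)
    (h : Integrable (fun x : ℝ => |x| ^ p) μ) {q : ℝ≥0∞} (hq : q ≤ ENNReal.ofReal p) :
    MemLp id q μ := by
  refine MemLp.mono_exponent ?_ hq
  rw [← integrable_norm_rpow_iff aestronglyMeasurable_id (by simpa using hp) ENNReal.ofReal_ne_top,
    ENNReal.toReal_ofReal hp.le]
  simpa using h

theorem sq_sub_min_sq_le_abs_rpow_div {p R : ℝ} (hp : 2 ≤ p) (hR : 0 < R) (x : ℝ) :
    x ^ 2 - min (x ^ 2) (R ^ 2) ≤ |x| ^ p / R ^ (p - 2) := by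
  rcases le_or_gt |x| R with hx | hx
  · have : x ^ 2 ≤ R ^ 2 := by nlinarith [abs_nonneg x, sq_abs x]
    rw [min_eq_left this, sub_self]
    positivity
  · have hx0 : 0 < |x| := hR.trans hx
    calc x ^ 2 - min (x ^ 2) (R ^ 2) ≤ |x| ^ (2 : ℝ) := by
          rw [Real.rpow_two, sq_abs]; linarith [le_min (sq_nonneg x) (sq_nonneg R)]
      _ = |x| ^ p / |x| ^ (p - 2) := by rw [Real.rpow_sub hx0, div_div_cancel₀ (by positivity)]
      _ ≤ |x| ^ p / R ^ (p - 2) := by gcongr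

theorem integral_sq_sub_integral_min_sq_mem_Icc {p R : ℝ} (hp : 2 ≤ p) (hR : 0 < R)
    (h : Integrable (fun x : ℝ => |x| ^ p) μ) :
    (∫ x, x ^ 2 ∂μ) - ∫ x, min (x ^ 2) (R ^ 2) ∂μ ∈ Icc 0 ((∫ x, |x| ^ p ∂μ) / R ^ (p - 2)) := by
  have hsq : Integrable (fun x : ℝ => x ^ 2) μ :=
    (memLp_id_of_integrable_abs_rpow (by linarith) h (by simpa using hp)).integrable_sq
  have hmin : Integrable (fun x : ℝ => min (x ^ 2) (R ^ 2)) μ :=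
    Integrable.of_bound (by fun_prop) (R ^ 2) (ae_of_all _ fun x => by
      rw [Real.norm_of_nonneg (by positivity)]; exact min_le_right _ _)
  rw [← integral_sub hsq hmin, ← integral_div]
  exact ⟨integral_nonneg fun x => sub_nonneg.2 (min_le_left _ _),
    integral_mono (hsq.sub hmin) (h.div_const _) (sq_sub_min_sq_le_abs_rpow_div hp hR)⟩

end Moments

theorem abs_integral_sq_sub_le {p V R : ℝ} (hp : 2 ≤ p) (hR : 0 < R) {μ ν : Measure ℝ}
    [IsProbabilityMeasure μ] [IsProbabilityMeasure ν]
    (hμ : Integrable (fun x : ℝ => |x| ^ p) μ) (hν : Integrable (fun x : ℝ => |x| ^ p) ν)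
    (hμV : (∫ x, |x| ^ p ∂μ) ≤ V) (hνV : (∫ x, |x| ^ p ∂ν) ≤ V) :
    |(∫ x, x ^ 2 ∂μ) - ∫ x, x ^ 2 ∂ν|
      ≤ 2 * R * (∫ x, |cdf μ x - cdf ν x|) + 2 * V / R ^ (p - 2) := by
  have habs : ∀ (κ : Measure ℝ) [IsProbabilityMeasure κ], Integrable (fun x : ℝ => |x| ^ p) κ →
      Integrable (fun x : ℝ => |x|) κ := fun κ _ hκ =>
    (memLp_one_iff_integrable.1 (memLp_id_of_integrable_abs_rpow (by linarith) hκ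
      (by simpa using (by linarith : (1 : ℝ) ≤ p)))).abs
  have hhead := abs_integral_min_sq_sub_le μ ν (habs μ hμ) (habs ν hν) hR.le
  obtain ⟨hμ₀, hμ₁⟩ := integral_sq_sub_integral_min_sq_mem_Icc hp hR hμ
  obtain ⟨hν₀, hν₁⟩ := integral_sq_sub_integral_min_sq_mem_Icc hp hR hν
  have hμV' : (∫ x, |x| ^ p ∂μ) / R ^ (p - 2) ≤ V / R ^ (p - 2) := by gcongr
  have hνV' : (∫ x, |x| ^ p ∂ν) / R ^ (p - 2) ≤ V / R ^ (p - 2) := by gcongr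
  have h2V : 2 * V / R ^ (p - 2) = V / R ^ (p - 2) + V / R ^ (p - 2) := by ring
  rw [h2V, abs_le]
  rw [abs_le] at hhead
  constructor <;> linarith

theorem le_mul_rpow_of_forall_le {A W V p : ℝ} (hp : 2 < p) (hW : 0 ≤ W)
    (h : ∀ R > 0, A ≤ 2 * R * W + 2 * V / R ^ (p - 2)) :
    A ≤ (2 + 2 * V) * W ^ ((p - 2) / (p - 1)) := by
  have hp1 : p - 1 ≠ 0 := by linarith
  have hexp : 0 < (p - 2) / (p - 1) := div_pos (by linarith) (by linarith)
  rcases hW.eq_or_lt with rfl | hW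
  · rw [Real.zero_rpow hexp.ne', mul_zero]
    refine ge_of_tendsto ((tendsto_const_nhds (x := 2 * V)).div_atTop
      (tendsto_rpow_atTop (by linarith : 0 < p - 2)))
      (eventually_gt_atTop 0 |>.mono fun R hR => ?_)
    simpa using h R hR
  · set R := W ^ (-(p - 1)⁻¹)
    have hRW : R * W = W ^ ((p - 2) / (p - 1)) := by
      rw [← Real.rpow_add_one hW.ne']
      congr 1
      field_simp
      ring
    have hRp : R ^ (p - 2) = (W ^ ((p - 2) / (p - 1)))⁻¹ := by
      rw [← Real.rpow_mul hW.le, ← Real.rpow_neg hW.le]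
      congr 1
      field_simp
    calc A ≤ 2 * R * W + 2 * V / R ^ (p - 2) := h R (by positivity)
      _ = (2 + 2 * V) * W ^ ((p - 2) / (p - 1)) := by rw [hRp, mul_assoc, hRW]; field_simp

theorem stmt_14 (p V : ℝ) (hp : 2 < p) (hV : 0 < V) :
    (∀ (μ ν : Measure ℝ), IsProbabilityMeasure μ → IsProbabilityMeasure ν →
      Integrable (fun x : ℝ => |x| ^ p) μ → Integrable (fun x : ℝ => |x| ^ p) ν →
      (∫ x, |x| ^ p ∂μ) ≤ V → (∫ x, |x| ^ p ∂ν) ≤ V →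
      ∀ R : ℝ, 0 < R →
        |(∫ x, x ^ 2 ∂μ) - ∫ x, x ^ 2 ∂ν|
          ≤ 2 * R * (∫ x : ℝ, |cdf μ x - cdf ν x|) + 2 * V / R ^ (p - 2)) ∧
    (∃ C : ℝ, 0 < C ∧
      ∀ (μ ν : Measure ℝ), IsProbabilityMeasure μ → IsProbabilityMeasure ν →
        Integrable (fun x : ℝ => |x| ^ p) μ → Integrable (fun x : ℝ => |x| ^ p) ν →
        (∫ x, |x| ^ p ∂μ) ≤ V → (∫ x, |x| ^ p ∂ν) ≤ V →
        |(∫ x, x ^ 2 ∂μ) - ∫ x, x ^ 2 ∂ν|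
          ≤ C * (∫ x : ℝ, |cdf μ x - cdf ν x|) ^ ((p - 2) / (p - 1))) :=
  ⟨fun _ _ _ _ hμ hν hμV hνV _ hR => abs_integral_sq_sub_le hp.le hR hμ hν hμV hνV,
    2 + 2 * V, by positivity, fun _ _ _ _ hμ hν hμV hνV =>
      le_mul_rpow_of_forall_le hp (integral_nonneg fun _ => abs_nonneg _)
        fun _ hR => abs_integral_sq_sub_le hp.le hR hμ hν hμV hνV⟩
end
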